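/- The function p(w) = √(ϑ/π)·exp(−ϑ(w − m)²), with ϑ = 1/(8ηp₀p₁) > 0 and m = p₀ − p₁, satisfies the stationary Fokker–Planck equation d/dw[p(w)·(p₀(w−1) + p₁(w+1))/2] + 2ηp₀p₁·d²p/dw² = 0 for all w. -/
import Mathlib


/-- The Gaussian `p(w) = √(ϑ/π)·exp(−ϑ(w − m)²)`, with `ϑ = 1/(8ηp₀p₁)` and
`m = p₀ − p₁`, satisfies the stationary Fokker–Planck equation of SGD:
`d/dw[p(w)·(p₀(w−1) + p₁(w+1))/2] + 2ηp₀p₁·d²p/dw² = 0`. -/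
theorem sgd_stationary_fokker_planck
    (η p₀ p₁ ϑ m : ℝ) (hη : 0 < η)
    (hp₀ : 0 < p₀) (hp₀' : p₀ < 1) (hp₁ : 0 < p₁) (hp₁' : p₁ < 1)
    (hsum : p₀ + p₁ = 1)
    (hϑ : ϑ = 1 / (8 * η * p₀ * p₁))
    (hm : m = p₀ - p₁)
    (p : ℝ → ℝ)
    (hp : ∀ w, p w = Real.sqrt (ϑ / Real.pi) * Real.exp (-ϑ * (w - m)^2)) :
    ∀ w, deriv (fun w => p w * ((p₀ * (w - 1) + p₁ * (w + 1)) / 2)) w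
          + 2 * η * p₀ * p₁ * deriv (deriv p) w = 0 := by
  have key : 2 * η * p₀ * p₁ * ϑ = 1 / 4 := by
    rw [hϑ]; field_simp; ring
  set C := Real.sqrt (ϑ / Real.pi) with hC
  have hfun : p = fun w => C * Real.exp (-ϑ * (w - m)^2) := funext hp
  subst hfun
  have hd1 : ∀ w, HasDerivAt (fun w => C * Real.exp (-ϑ * (w - m)^2))
      (C * (Real.exp (-ϑ * (w - m)^2) * (-ϑ * (2*(w-m))))) w := by
    intro w
    have h0 : HasDerivAt (fun w : ℝ => -ϑ * (w - m)^2) (-ϑ * (2*(w-m))) w := by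
      have h := (((hasDerivAt_id w).sub_const m).pow 2).const_mul (-ϑ)
      simpa [mul_comm, mul_assoc, mul_left_comm] using h
    exact (h0.exp).const_mul C
  have hderiv : deriv (fun w => C * Real.exp (-ϑ * (w - m)^2))
      = fun w => C * (Real.exp (-ϑ * (w - m)^2) * (-ϑ * (2*(w-m)))) :=
    funext fun w => (hd1 w).deriv
  intro w
  -- second derivative
  have hd2 : HasDerivAt (fun w => C * (Real.exp (-ϑ * (w - m)^2) * (-ϑ * (2*(w-m)))))
      (C * ((Real.exp (-ϑ * (w - m)^2) * (-ϑ * (2*(w-m)))) * (-ϑ * (2*(w-m)))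
        + Real.exp (-ϑ * (w - m)^2) * (-ϑ * 2))) w := by
    have h0 : HasDerivAt (fun w : ℝ => -ϑ * (w - m)^2) (-ϑ * (2*(w-m))) w := by
      have h := (((hasDerivAt_id w).sub_const m).pow 2).const_mul (-ϑ)
      simpa [mul_comm, mul_assoc, mul_left_comm] using h
    have hexp := h0.exp
    have hlin : HasDerivAt (fun w : ℝ => -ϑ * (2*(w-m))) (-ϑ * 2) w := by
      have h := (((hasDerivAt_id w).sub_const m).const_mul (2:ℝ)).const_mul (-ϑ)
      simpa using h
    exact (hexp.mul hlin).const_mul C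
  have hsecond : deriv (deriv (fun w => C * Real.exp (-ϑ * (w - m)^2))) w
      = C * ((Real.exp (-ϑ * (w - m)^2) * (-ϑ * (2*(w-m)))) * (-ϑ * (2*(w-m)))
        + Real.exp (-ϑ * (w - m)^2) * (-ϑ * 2)) := by
    rw [hderiv]; exact hd2.deriv
  -- first term
  have hlin2 : HasDerivAt (fun w : ℝ => (p₀ * (w - 1) + p₁ * (w + 1)) / 2)
      ((p₀ + p₁) / 2) w := by
    have h1 : HasDerivAt (fun w : ℝ => p₀ * (w - 1)) p₀ w := by
      simpa using ((hasDerivAt_id w).sub_const 1).const_mul p₀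
    have h2 : HasDerivAt (fun w : ℝ => p₁ * (w + 1)) p₁ w := by
      simpa using ((hasDerivAt_id w).add_const 1).const_mul p₁
    simpa [add_div] using (h1.add h2).div_const 2
  have hfirst : deriv (fun w => (C * Real.exp (-ϑ * (w - m)^2))
        * ((p₀ * (w - 1) + p₁ * (w + 1)) / 2)) w
      = (C * (Real.exp (-ϑ * (w - m)^2) * (-ϑ * (2*(w-m)))))
          * ((p₀ * (w - 1) + p₁ * (w + 1)) / 2)
        + (C * Real.exp (-ϑ * (w - m)^2)) * ((p₀ + p₁) / 2) :=
    ((hd1 w).mul hlin2).deriv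
  rw [hfirst, hsecond]
  have hwm : p₀ * (w - 1) + p₁ * (w + 1) = w - m := by
    linear_combination w * hsum + hm
  rw [hwm]
  linear_combination (C * Real.exp (-ϑ * (w - m)^2) * (4*ϑ*(w-m)^2 - 2)) * key
    + (C * Real.exp (-ϑ * (w - m)^2) / 2) * hsum
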